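/- arXiv:0901.1891 — 4 statements merged into one kernel-verified Lean document; each statement's English description precedes it below -/
import Mathlib

section
/- Let H be a complex Hilbert space and T, S : H → H bounded linear operators. Set R_T = (1 + T*T)⁻¹, R_{T*} = (1 + TT*)⁻¹ and similarly for S, and let d(T,S) = max{‖R_T − R_S‖, ‖R_{T*} − R_{S*}‖, ‖T R_T − S R_S‖}. Then, with P_{G(T)} and P_{G(S)} the orthogonal projections of H ⊕ H onto the graphs of T and S, one has d(T,S) ≤ ‖P_{G(T)} − P_{G(S)}‖ ≤ 4·d(T,S). -/
/-- The graph of a bounded operator `T : H → H`, viewed as a submodule of the Hilbert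
space `H ⊕ H` (the `ℓ²`-direct sum `WithLp 2 (H × H)`). -/
noncomputable def boundedGraph {H : Type*} [NormedAddCommGroup H] [InnerProductSpace ℂ H]
    (T : H →L[ℂ] H) : Submodule ℂ (WithLp 2 (H × H)) :=
  (LinearMap.graph (T : H →ₗ[ℂ] H)).comap (WithLp.linearEquiv 2 ℂ (H × H)).toLinearMap

/-- `P` is the orthogonal projection of the Hilbert space `E` onto the subspace `G`:
it is the (unique) selfadjoint idempotent bounded operator with range `G`. -/
def IsOrthogonalProjectionOnto {E : Type*} [NormedAddCommGroup E] [InnerProductSpace ℂ E]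
    [CompleteSpace E] (P : E →L[ℂ] E) (G : Submodule ℂ E) : Prop :=
  IsSelfAdjoint P ∧ IsIdempotentElem P ∧ LinearMap.range (P : E →ₗ[ℂ] E) = G

/-!
The orthogonal projection onto `G(T)` is the operator matrix
`[[R_T, R_T T*], [T R_T, 1 - R_{T*}]]`: it is self-adjoint, and the intertwining relation
`T R_T = R_{T*} T` shows that it maps `H ⊕ H` into `G(T)` and fixes `G(T)`. So
`P_{G(T)} - P_{G(S)}` is the operator matrix of the entrywise differences, whose `(1,2)` entry is
the adjoint of its `(2,1)` entry. The norm of an operator matrix is at least the norm of each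
entry and at most the sum of the norms of the four entries.
-/

open ContinuousLinearMap WithLp

section BlockOperator

variable {𝕜 E F : Type*} [NontriviallyNormedField 𝕜] [NormedAddCommGroup E] [NormedSpace 𝕜 E]
  [NormedAddCommGroup F] [NormedSpace 𝕜 F]

noncomputable def blockOp (A : E →L[𝕜] E) (B : F →L[𝕜] E) (C : E →L[𝕜] F) (D : F →L[𝕜] F) :
    WithLp 2 (E × F) →L[𝕜] WithLp 2 (E × F) :=
  (prodContinuousLinearEquiv 2 𝕜 E F).symm.toContinuousLinearMap ∘L
    (A.coprod B).prod (C.coprod D) ∘L (prodContinuousLinearEquiv 2 𝕜 E F).toContinuousLinearMap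

variable (A A' : E →L[𝕜] E) (B B' : F →L[𝕜] E) (C C' : E →L[𝕜] F) (D D' : F →L[𝕜] F)

@[simp]
theorem blockOp_apply_fst (z : WithLp 2 (E × F)) :
    (blockOp A B C D z).fst = A z.fst + B z.snd := rfl

@[simp]
theorem blockOp_apply_snd (z : WithLp 2 (E × F)) :
    (blockOp A B C D z).snd = C z.fst + D z.snd := rfl

theorem blockOp_sub :
    blockOp A B C D - blockOp A' B' C' D' = blockOp (A - A') (B - B') (C - C') (D - D') := by
  ext z : 1
  refine ofLp_injective 2 (Prod.ext ?_ ?_)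
  · simp only [sub_apply, ofLp_sub, Prod.fst_sub, ofLp_fst, blockOp_apply_fst]
    abel
  · simp only [sub_apply, ofLp_sub, Prod.snd_sub, ofLp_snd, blockOp_apply_snd]
    abel

theorem norm_le_norm_fst_add_norm_snd (z : WithLp 2 (E × F)) : ‖z‖ ≤ ‖z.fst‖ + ‖z.snd‖ := by
  have := prod_norm_sq_eq_of_L2 z
  nlinarith [norm_nonneg z, norm_nonneg z.fst, norm_nonneg z.snd]

theorem norm_blockOp_le : ‖blockOp A B C D‖ ≤ ‖A‖ + ‖B‖ + ‖C‖ + ‖D‖ := by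
  refine opNorm_le_bound _ (by positivity) fun z => ?_
  have hA := A.le_opNorm_of_le (WithLp.norm_fst_le E z)
  have hB := B.le_opNorm_of_le (WithLp.norm_snd_le E z)
  have hC := C.le_opNorm_of_le (WithLp.norm_fst_le E z)
  have hD := D.le_opNorm_of_le (WithLp.norm_snd_le E z)
  calc ‖blockOp A B C D z‖ ≤ ‖A z.fst + B z.snd‖ + ‖C z.fst + D z.snd‖ :=
        norm_le_norm_fst_add_norm_snd _
    _ ≤ (‖A z.fst‖ + ‖B z.snd‖) + (‖C z.fst‖ + ‖D z.snd‖) :=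
        add_le_add (norm_add_le _ _) (norm_add_le _ _)
    _ ≤ (‖A‖ + ‖B‖ + ‖C‖ + ‖D‖) * ‖z‖ := by linarith

theorem norm_le_norm_blockOp₁₁ : ‖A‖ ≤ ‖blockOp A B C D‖ :=
  opNorm_le_bound _ (norm_nonneg _) fun x => calc
    ‖A x‖ = ‖(blockOp A B C D (toLp 2 (x, 0))).fst‖ := by simp
    _ ≤ ‖blockOp A B C D‖ * ‖x‖ :=
      (WithLp.norm_fst_le E _).trans (le_opNorm_of_le _ (norm_toLp_fst 2 E F x).le)

theorem norm_le_norm_blockOp₂₁ : ‖C‖ ≤ ‖blockOp A B C D‖ :=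
  opNorm_le_bound _ (norm_nonneg _) fun x => calc
    ‖C x‖ = ‖(blockOp A B C D (toLp 2 (x, 0))).snd‖ := by simp
    _ ≤ ‖blockOp A B C D‖ * ‖x‖ :=
      (WithLp.norm_snd_le E _).trans (le_opNorm_of_le _ (norm_toLp_fst 2 E F x).le)

theorem norm_le_norm_blockOp₂₂ : ‖D‖ ≤ ‖blockOp A B C D‖ :=
  opNorm_le_bound _ (norm_nonneg _) fun y => calc
    ‖D y‖ = ‖(blockOp A B C D (toLp 2 (0, y))).snd‖ := by simp
    _ ≤ ‖blockOp A B C D‖ * ‖y‖ :=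
      (WithLp.norm_snd_le E _).trans (le_opNorm_of_le _ (norm_toLp_snd 2 E F y).le)

end BlockOperator

section BlockOperatorAdjoint

variable {𝕜 E F : Type*} [RCLike 𝕜] [NormedAddCommGroup E] [InnerProductSpace 𝕜 E]
  [CompleteSpace E] [NormedAddCommGroup F] [InnerProductSpace 𝕜 F] [CompleteSpace F]

theorem adjoint_blockOp (A : E →L[𝕜] E) (B : F →L[𝕜] E) (C : E →L[𝕜] F) (D : F →L[𝕜] F) :
    (blockOp A B C D).adjoint = blockOp (adjoint A) (adjoint C) (adjoint B) (adjoint D) := by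
  refine ((eq_adjoint_iff _ _).mpr fun z w => ?_).symm
  simp only [prod_inner_apply, ofLp_fst, ofLp_snd, blockOp_apply_fst, blockOp_apply_snd,
    inner_add_left, inner_add_right, adjoint_inner_left]
  ring

end BlockOperatorAdjoint

section RingInverse

variable {R : Type*} [Ring R] {x y : R}

theorem mul_ringInverse_one_add_mul_comm (h₁ : IsUnit (1 + y * x)) (h₂ : IsUnit (1 + x * y)) :
    x * Ring.inverse (1 + y * x) = Ring.inverse (1 + x * y) * x := by
  obtain ⟨u, hu⟩ := h₁
  obtain ⟨v, hv⟩ := h₂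
  have hxuv : SemiconjBy x u v := by
    rw [SemiconjBy, hu, hv]
    noncomm_ring
  rw [← hu, ← hv, Ring.inverse_unit, Ring.inverse_unit]
  exact hxuv.units_inv_right.eq

theorem mul_ringInverse_one_add_mul_mul (h₁ : IsUnit (1 + y * x)) (h₂ : IsUnit (1 + x * y)) :
    x * Ring.inverse (1 + y * x) * y = 1 - Ring.inverse (1 + x * y) := by
  rw [mul_ringInverse_one_add_mul_comm h₁ h₂, mul_assoc, eq_sub_iff_add_eq, ← mul_add_one,
    add_comm (x * y), Ring.inverse_mul_cancel _ h₂]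

end RingInverse

theorem isUnit_one_add_star_mul_self {A : Type*} [CStarAlgebra A] [PartialOrder A]
    [StarOrderedRing A] (a : A) : IsUnit (1 + star a * a) :=
  CStarAlgebra.isUnit_of_le 1 (le_add_of_nonneg_right (star_mul_self_nonneg a))
    isStrictlyPositive_one

theorem isSelfAdjoint_ringInverse_one_add_star_mul_self {R : Type*} [Ring R] [StarRing R]
    (a : R) : IsSelfAdjoint (Ring.inverse (1 + star a * a)) :=
  ((IsSelfAdjoint.one R).add (IsSelfAdjoint.star_mul_self a)).ringInverse

theorem norm_mul_star_sub_mul_star {R : Type*} [NonUnitalNormedRing R] [StarRing R]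
    [NormedStarGroup R] {r s : R} (hr : IsSelfAdjoint r) (hs : IsSelfAdjoint s) (a b : R) :
    ‖r * star a - s * star b‖ = ‖a * r - b * s‖ := by
  rw [← norm_star, star_sub, star_mul, star_mul, star_star, star_star, hr.star_eq, hs.star_eq]

theorem IsOrthogonalProjectionOnto.unique {E : Type*} [NormedAddCommGroup E]
    [InnerProductSpace ℂ E] [CompleteSpace E] {P Q : E →L[ℂ] E} {G : Submodule ℂ E}
    (hP : IsOrthogonalProjectionOnto P G) (hQ : IsOrthogonalProjectionOnto Q G) : P = Q :=
  IsStarProjection.ext ⟨hP.2.1, hP.1⟩ ⟨hQ.2.1, hQ.1⟩ (hP.2.2.trans hQ.2.2.symm)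

theorem mem_boundedGraph {H : Type*} [NormedAddCommGroup H] [InnerProductSpace ℂ H]
    {T : H →L[ℂ] H} {z : WithLp 2 (H × H)} : z ∈ boundedGraph T ↔ z.snd = T z.fst := by
  simp [boundedGraph, LinearMap.mem_graph_iff]

section Graph

variable {H : Type*} [NormedAddCommGroup H] [InnerProductSpace ℂ H] [CompleteSpace H]

noncomputable def graphProjection (T : H →L[ℂ] H) : WithLp 2 (H × H) →L[ℂ] WithLp 2 (H × H) :=
  blockOp (Ring.inverse (1 + adjoint T * T)) (Ring.inverse (1 + adjoint T * T) * adjoint T)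
    (T * Ring.inverse (1 + adjoint T * T)) (1 - Ring.inverse (1 + T * adjoint T))

variable (T : H →L[ℂ] H)

theorem isUnit_one_add_adjoint_mul_self : IsUnit (1 + adjoint T * T) :=
  isUnit_one_add_star_mul_self T

theorem isUnit_one_add_mul_adjoint_self : IsUnit (1 + T * adjoint T) := by
  simpa [star_eq_adjoint] using isUnit_one_add_star_mul_self (adjoint T)

theorem isSelfAdjoint_graphProjection : IsSelfAdjoint (graphProjection T) := by
  have hr := isSelfAdjoint_ringInverse_one_add_star_mul_self T
  have hs := isSelfAdjoint_ringInverse_one_add_star_mul_self (star T)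
  rw [star_star] at hs
  rw [isSelfAdjoint_iff', graphProjection, adjoint_blockOp]
  simp only [← star_eq_adjoint, star_mul, star_sub, star_one, star_star, hr.star_eq, hs.star_eq]

theorem isProj_graphProjection :
    LinearMap.IsProj (boundedGraph T) (graphProjection T : WithLp 2 (H × H) →ₗ[ℂ] _) := by
  have h₁ := isUnit_one_add_adjoint_mul_self T
  have h₂ := isUnit_one_add_mul_adjoint_self T
  set r := Ring.inverse (1 + adjoint T * T)
  set s := Ring.inverse (1 + T * adjoint T)
  have hr : r + r * adjoint T * T = 1 := by
    rw [mul_assoc, ← mul_one_add, Ring.inverse_mul_cancel _ h₁]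
  have hs : T * r + (1 - s) * T = T := by
    rw [mul_ringInverse_one_add_mul_comm h₁ h₂]
    noncomm_ring
  constructor
  · intro z
    rw [mem_boundedGraph]
    simp only [graphProjection, coe_coe, blockOp_apply_fst, blockOp_apply_snd]
    rw [← mul_ringInverse_one_add_mul_mul h₁ h₂, map_add]
    rfl
  · intro z hz
    rw [mem_boundedGraph] at hz
    refine ofLp_injective 2 (Prod.ext ?_ ?_)
    · simpa [graphProjection, hz] using congr($hr z.fst)
    · simpa [graphProjection, hz] using congr($hs z.fst)

theorem isOrthogonalProjectionOnto_graphProjection :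
    IsOrthogonalProjectionOnto (graphProjection T) (boundedGraph T) :=
  ⟨isSelfAdjoint_graphProjection T,
    isIdempotentElem_toLinearMap_iff.mp (isProj_graphProjection T).isIdempotentElem,
    (isProj_graphProjection T).range⟩

end Graph

/-- Let `T, S : H → H` be bounded operators on a complex Hilbert space, let
`R_T = (1 + T*T)⁻¹`, `R_{T*} = (1 + TT*)⁻¹` (and similarly for `S`), and let
`d(T,S) = max{‖R_T − R_S‖, ‖R_{T*} − R_{S*}‖, ‖T R_T − S R_S‖}`. Then, with `P_{G(T)}`,
`P_{G(S)}` the orthogonal projections of `H ⊕ H` onto the graphs of `T` and `S`,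
one has `d(T,S) ≤ ‖P_{G(T)} − P_{G(S)}‖ ≤ 4·d(T,S)`. -/
theorem stmt_1 {H : Type*} [NormedAddCommGroup H] [InnerProductSpace ℂ H] [CompleteSpace H]
    (T S : H →L[ℂ] H)
    (PT PS : WithLp 2 (H × H) →L[ℂ] WithLp 2 (H × H))
    (hPT : IsOrthogonalProjectionOnto PT (boundedGraph T))
    (hPS : IsOrthogonalProjectionOnto PS (boundedGraph S)) :
    max (max ‖Ring.inverse (1 + ContinuousLinearMap.adjoint T * T) -
              Ring.inverse (1 + ContinuousLinearMap.adjoint S * S)‖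
          ‖Ring.inverse (1 + T * ContinuousLinearMap.adjoint T) -
              Ring.inverse (1 + S * ContinuousLinearMap.adjoint S)‖)
        ‖T * Ring.inverse (1 + ContinuousLinearMap.adjoint T * T) -
            S * Ring.inverse (1 + ContinuousLinearMap.adjoint S * S)‖ ≤ ‖PT - PS‖ ∧
    ‖PT - PS‖ ≤ 4 *
      max (max ‖Ring.inverse (1 + ContinuousLinearMap.adjoint T * T) -
                Ring.inverse (1 + ContinuousLinearMap.adjoint S * S)‖
            ‖Ring.inverse (1 + T * ContinuousLinearMap.adjoint T) -
                Ring.inverse (1 + S * ContinuousLinearMap.adjoint S)‖)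
          ‖T * Ring.inverse (1 + ContinuousLinearMap.adjoint T * T) -
              S * Ring.inverse (1 + ContinuousLinearMap.adjoint S * S)‖ := by
  rw [hPT.unique (isOrthogonalProjectionOnto_graphProjection T),
    hPS.unique (isOrthogonalProjectionOnto_graphProjection S), graphProjection, graphProjection,
    blockOp_sub, sub_sub_sub_cancel_left]
  have hB := norm_mul_star_sub_mul_star (isSelfAdjoint_ringInverse_one_add_star_mul_self T)
    (isSelfAdjoint_ringInverse_one_add_star_mul_self S) T S
  simp only [star_eq_adjoint] at hB
  constructor
  · refine max_le (max_le (norm_le_norm_blockOp₁₁ _ _ _ _) ?_) (norm_le_norm_blockOp₂₁ _ _ _ _)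
    rw [norm_sub_rev]
    exact norm_le_norm_blockOp₂₂ _ _ _ _
  · refine (norm_blockOp_le _ _ _ _).trans ?_
    rw [hB, norm_sub_rev (Ring.inverse (1 + S * adjoint S))]
    have key (a c e : ℝ) : a + c + c + e ≤ 4 * max (max a e) c := by
      linarith [le_max_left (max a e) c, le_max_right (max a e) c, le_max_left a e, le_max_right a e]
    exact key _ _ _
end

section
/- Let A be a unital complex C*-algebra and let a, b ∈ A be selfadjoint. Define d(a,b) = max{‖(1 + a²)⁻¹ − (1 + b²)⁻¹‖, ‖a(1 + a²)⁻¹ − b(1 + b²)⁻¹‖} and d̃(a,b) = ‖(a + i·1)⁻¹ − (b + i·1)⁻¹‖. Then (1/2)·d̃(a,b) ≤ d(a,b) ≤ d̃(a,b). -/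
/-!
For selfadjoint `a`, `(a + i)⁻¹ = (a - i)(1 + a²)⁻¹` has real part `a(1 + a²)⁻¹` and imaginary
part `-(1 + a²)⁻¹`, both selfadjoint since `a` commutes with `(1 + a²)⁻¹`. Hence the two norms
in `d(a, b)` are the norms of the real and imaginary parts of `x = (a + i)⁻¹ - (b + i)⁻¹`.
Each of these is at most `‖x‖`, and `‖x‖ ≤ ‖ℜ x‖ + ‖ℑ x‖ ≤ 2 d(a, b)`.
-/

open Complex ComplexStarModule

theorem Commute.ringInverse_right {M₀ : Type*} [MonoidWithZero M₀] {a b : M₀}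
    (h : Commute a b) : Commute a (Ring.inverse b) := by
  by_cases hb : IsUnit b
  · obtain ⟨u, rfl⟩ := hb
    rw [Ring.inverse_unit]
    exact h.units_inv_right
  · rw [Ring.inverse_non_unit _ hb]
    exact Commute.zero_right a

section StarModule

variable {A : Type*} [SeminormedAddCommGroup A] [StarAddMonoid A] [NormedSpace ℂ A]
  [StarModule ℂ A]

lemma norm_le_norm_realPart_add_norm_imaginaryPart (x : A) :
    ‖x‖ ≤ ‖(ℜ x : A)‖ + ‖(ℑ x : A)‖ := by
  conv_lhs => rw [← realPart_add_I_smul_imaginaryPart x]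
  simpa [norm_smul] using norm_add_le (ℜ x : A) (I • (ℑ x : A))

end StarModule

section StarModuleAddGroup

variable {A : Type*} [AddCommGroup A] [Module ℂ A] [StarAddMonoid A] [StarModule ℂ A]

lemma realPart_add_I_smul {p q : A} (hp : IsSelfAdjoint p) (hq : IsSelfAdjoint q) :
    (ℜ (p + I • q) : A) = p := by
  simp [hp.coe_realPart, hq.imaginaryPart]

lemma imaginaryPart_add_I_smul {p q : A} (hp : IsSelfAdjoint p) (hq : IsSelfAdjoint q) :
    (ℑ (p + I • q) : A) = q := by
  simp [hp.imaginaryPart, hq.coe_realPart]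

end StarModuleAddGroup

lemma add_I_smul_one_mul_sub_I_smul_one {A : Type*} [Ring A] [Algebra ℂ A] (a : A) :
    (a + I • (1 : A)) * (a - I • (1 : A)) = 1 + a ^ 2 := by
  have hI : (I • (1 : A)) * (I • (1 : A)) = -1 := by
    rw [smul_mul_smul_comm, one_mul, I_mul_I, neg_smul, one_smul]
  rw [mul_sub, add_mul, add_mul, hI, smul_mul_assoc, mul_smul_comm, one_mul, mul_one, sq]
  abel

namespace IsSelfAdjoint

variable {A : Type*} [CStarAlgebra A] {a : A}

lemma isUnit_add_smul_one (ha : IsSelfAdjoint a) {z : ℂ} (hz : z.im ≠ 0) :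
    IsUnit (a + z • (1 : A)) := by
  have hz' : -z ∉ spectrum ℂ a := fun h ↦ hz (by simpa using ha.im_eq_zero_of_mem_spectrum h)
  simpa [Algebra.algebraMap_eq_smul_one] using (spectrum.notMem_iff.mp hz').neg

lemma ringInverse_add_I_smul_one (ha : IsSelfAdjoint a) :
    Ring.inverse (a + I • (1 : A)) =
      a * Ring.inverse (1 + a ^ 2) + I • -Ring.inverse (1 + a ^ 2) := by
  have hplus : IsUnit (a + I • (1 : A)) := ha.isUnit_add_smul_one (by simp)
  have hminus : IsUnit (a - I • (1 : A)) := by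
    simpa [sub_eq_add_neg] using ha.isUnit_add_smul_one (z := -I) (by simp)
  have hsq : IsUnit (1 + a ^ 2) := add_I_smul_one_mul_sub_I_smul_one a ▸ hplus.mul hminus
  calc Ring.inverse (a + I • (1 : A))
      = Ring.inverse (a + I • (1 : A)) * ((a + I • (1 : A)) * (a - I • (1 : A))) *
          Ring.inverse (1 + a ^ 2) := by
        rw [add_I_smul_one_mul_sub_I_smul_one, Ring.mul_inverse_cancel_right _ _ hsq]
    _ = (a - I • (1 : A)) * Ring.inverse (1 + a ^ 2) := by
        rw [← mul_assoc, Ring.inverse_mul_cancel _ hplus, one_mul]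
    _ = _ := by rw [sub_mul, smul_mul_assoc, one_mul, smul_neg, sub_eq_add_neg]

lemma isSelfAdjoint_ringInverse_one_add_sq (ha : IsSelfAdjoint a) :
    IsSelfAdjoint (Ring.inverse (1 + a ^ 2)) :=
  ((IsSelfAdjoint.one A).add (ha.pow 2)).ringInverse

lemma isSelfAdjoint_mul_ringInverse_one_add_sq (ha : IsSelfAdjoint a) :
    IsSelfAdjoint (a * Ring.inverse (1 + a ^ 2)) :=
  (ha.commute_iff ha.isSelfAdjoint_ringInverse_one_add_sq).mp
    ((Commute.one_right a).add_right (Commute.self_pow a 2)).ringInverse_right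

lemma realPart_ringInverse_add_I_smul_one (ha : IsSelfAdjoint a) :
    (ℜ (Ring.inverse (a + I • (1 : A))) : A) = a * Ring.inverse (1 + a ^ 2) := by
  rw [ha.ringInverse_add_I_smul_one, realPart_add_I_smul
    ha.isSelfAdjoint_mul_ringInverse_one_add_sq ha.isSelfAdjoint_ringInverse_one_add_sq.neg]

lemma imaginaryPart_ringInverse_add_I_smul_one (ha : IsSelfAdjoint a) :
    (ℑ (Ring.inverse (a + I • (1 : A))) : A) = -Ring.inverse (1 + a ^ 2) := by
  rw [ha.ringInverse_add_I_smul_one, imaginaryPart_add_I_smul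
    ha.isSelfAdjoint_mul_ringInverse_one_add_sq ha.isSelfAdjoint_ringInverse_one_add_sq.neg]

end IsSelfAdjoint

/-- Let `A` be a unital complex C*-algebra and let `a, b ∈ A` be selfadjoint. Define
`d(a,b) = max{‖(1 + a²)⁻¹ − (1 + b²)⁻¹‖, ‖a(1 + a²)⁻¹ − b(1 + b²)⁻¹‖}` and
`d̃(a,b) = ‖(a + i·1)⁻¹ − (b + i·1)⁻¹‖`. Then `(1/2)·d̃(a,b) ≤ d(a,b) ≤ d̃(a,b)`. -/
theorem stmt_6 {A : Type*} [CStarAlgebra A] (a b : A)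
    (ha : IsSelfAdjoint a) (hb : IsSelfAdjoint b) :
    (1 / 2 : ℝ) * ‖Ring.inverse (a + Complex.I • (1 : A)) -
        Ring.inverse (b + Complex.I • (1 : A))‖ ≤
      max ‖Ring.inverse (1 + a ^ 2) - Ring.inverse (1 + b ^ 2)‖
        ‖a * Ring.inverse (1 + a ^ 2) - b * Ring.inverse (1 + b ^ 2)‖ ∧
    max ‖Ring.inverse (1 + a ^ 2) - Ring.inverse (1 + b ^ 2)‖
        ‖a * Ring.inverse (1 + a ^ 2) - b * Ring.inverse (1 + b ^ 2)‖ ≤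
      ‖Ring.inverse (a + Complex.I • (1 : A)) - Ring.inverse (b + Complex.I • (1 : A))‖ := by
  set x := Ring.inverse (a + I • (1 : A)) - Ring.inverse (b + I • (1 : A))
  have hre : (ℜ x : A) = a * Ring.inverse (1 + a ^ 2) - b * Ring.inverse (1 + b ^ 2) := by
    simp only [x, map_sub, AddSubgroupClass.coe_sub, ha.realPart_ringInverse_add_I_smul_one,
      hb.realPart_ringInverse_add_I_smul_one]
  have him : ‖(ℑ x : A)‖ = ‖Ring.inverse (1 + a ^ 2) - Ring.inverse (1 + b ^ 2)‖ := by
    rw [← norm_neg]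
    simp only [x, map_sub, AddSubgroupClass.coe_sub, ha.imaginaryPart_ringInverse_add_I_smul_one,
      hb.imaginaryPart_ringInverse_add_I_smul_one, sub_neg_eq_add, neg_add_eq_sub, neg_sub]
  rw [← hre, ← him]
  constructor
  · linarith [norm_le_norm_realPart_add_norm_imaginaryPart x,
      le_max_left ‖(ℑ x : A)‖ ‖(ℜ x : A)‖, le_max_right ‖(ℑ x : A)‖ ‖(ℜ x : A)‖]
  · exact max_le (imaginaryPart.norm_le x) (realPart.norm_le x)
end

section
/- Let H be a complex Hilbert space and t a densely defined closed operator on H. Then its adjoint t* is densely defined, and the operator t̂ on the Hilbert space H ⊕ H with domain Dom(t̂) = Dom(t) × Dom(t*) defined by t̂(x, y) = (t*y, tx) is selfadjoint, i.e. t̂ coincides with its adjoint (t̂)* as an unbounded operator on H ⊕ H. -/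
/-!
For a closed subspace `g` of `E × F`, taking the graph adjoint twice is the double orthogonal
complement of `g` (after the unitary `(x, y) ↦ (-y, x)`), hence returns `g`. Applied to the graph
of a closed, densely defined `t`, this gives `Dom t*` dense (if `v ⊥ Dom t*` then `(0, v)` lies in
the graph of `t`, so `v = 0`) and `t** = t`. Testing against the vectors `(x, 0)` and `(0, y)` shows
that the adjoint of the block operator `[[0, S], [T, 0]]` is `[[0, T*], [S*, 0]]`; for `S = t*`
this is `[[0, t*], [t**, 0]] = t̂`.
-/

open scoped InnerProductSpace

section

variable {𝕜 E F : Type*} [RCLike 𝕜] [NormedAddCommGroup E] [InnerProductSpace 𝕜 E]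
  [NormedAddCommGroup F] [InnerProductSpace 𝕜 F]

namespace Submodule

theorem mem_adjoint_iff_toLp_mem_orthogonal (g : Submodule 𝕜 (E × F)) (a : F) (b : E) :
    (a, b) ∈ g.adjoint ↔
      WithLp.toLp 2 (-b, a) ∈ (g.comap (WithLp.linearEquiv 2 𝕜 (E × F)).toLinearMap)ᗮ := by
  simp only [mem_adjoint_iff, mem_orthogonal, mem_comap, LinearEquiv.coe_coe,
    WithLp.coe_linearEquiv, WithLp.prod_inner_apply, WithLp.ofLp_fst, WithLp.ofLp_snd,
    inner_neg_right, neg_add_eq_sub]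
  exact ⟨fun h u hu => h _ _ hu, fun h c d hcd => h (WithLp.toLp 2 (c, d)) hcd⟩

theorem adjoint_adjoint [CompleteSpace E] [CompleteSpace F] {g : Submodule 𝕜 (E × F)}
    (hg : IsClosed (g : Set (E × F))) : g.adjoint.adjoint = g := by
  set K := g.comap (WithLp.linearEquiv 2 𝕜 (E × F)).toLinearMap
  have : CompleteSpace K :=
    (hg.preimage (WithLp.prod_continuous_ofLp 2 E F)).completeSpace_coe
  ext x
  have hx : x ∈ g ↔ WithLp.toLp 2 x ∈ Kᗮᗮ := by rw [K.orthogonal_orthogonal]; rfl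
  rw [hx, mem_adjoint_iff, mem_orthogonal]
  constructor
  · intro h u hu
    have := h u.ofLp.2 (-u.ofLp.1) ((mem_adjoint_iff_toLp_mem_orthogonal g _ _).2
      (by rwa [neg_neg, Prod.mk.eta, WithLp.toLp_ofLp]))
    rw [WithLp.prod_inner_apply]
    simp only [inner_neg_left] at this
    linear_combination -this
  · intro h a b hab
    have := h _ ((mem_adjoint_iff_toLp_mem_orthogonal g a b).1 hab)
    rw [WithLp.prod_inner_apply] at this
    simp only [inner_neg_left] at this
    linear_combination -this

end Submodule

namespace LinearPMap

section

variable [CompleteSpace E] {T : E →ₗ.[𝕜] F}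

theorem mem_graph_adjoint_iff (hT : Dense (T.domain : Set E)) {y : F} {w : E} :
    (y, w) ∈ T†.graph ↔ ∀ x : T.domain, ⟪w, x⟫_𝕜 = ⟪y, T x⟫_𝕜 := by
  constructor
  · rintro h x
    obtain ⟨v, rfl, rfl⟩ := (mem_graph_iff _).1 h
    exact adjoint_isFormalAdjoint hT v x
  · intro h
    have hy : y ∈ T†.domain := mem_adjoint_domain_of_exists y ⟨w, h⟩
    exact (mem_graph_iff _).2 ⟨⟨y, hy⟩, rfl, adjoint_apply_eq hT ⟨y, hy⟩ h⟩

variable [CompleteSpace F]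

theorem dense_adjoint_domain (hT : Dense (T.domain : Set E)) (hc : T.IsClosed) :
    Dense (T†.domain : Set F) := by
  rw [Submodule.dense_iff_topologicalClosure_eq_top, Submodule.topologicalClosure_eq_top_iff,
    Submodule.eq_bot_iff]
  intro v hv
  have : ((0 : E), v) ∈ T.graph.adjoint.adjoint := by
    rw [Submodule.mem_adjoint_iff]
    intro a b hab
    rw [← adjoint_graph_eq_graph_adjoint hT] at hab
    rw [inner_zero_right, zero_sub, neg_eq_zero]
    exact (Submodule.mem_orthogonal _ _).1 hv a (mem_domain_of_mem_graph hab)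
  rw [Submodule.adjoint_adjoint hc] at this
  exact T.graph_fst_eq_zero_snd this rfl

theorem adjoint_adjoint (hT : Dense (T.domain : Set E)) (hc : T.IsClosed) : T†† = T := by
  refine eq_of_eq_graph ?_
  rw [adjoint_graph_eq_graph_adjoint (dense_adjoint_domain hT hc),
    adjoint_graph_eq_graph_adjoint hT, Submodule.adjoint_adjoint hc]

end

structure IsBlockAntidiag (A : WithLp 2 (E × F) →ₗ.[𝕜] WithLp 2 (E × F)) (T : E →ₗ.[𝕜] F)
    (S : F →ₗ.[𝕜] E) : Prop where
  domain_eq :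
    A.domain = (T.domain.prod S.domain).comap (WithLp.linearEquiv 2 𝕜 (E × F)).toLinearMap
  apply_eq : ∀ (p : A.domain) (x : T.domain) (y : S.domain),
    WithLp.linearEquiv 2 𝕜 (E × F) (p : WithLp 2 (E × F)) = ((x : E), (y : F)) →
      WithLp.linearEquiv 2 𝕜 (E × F) (A p) = ((S y : E), (T x : F))

namespace IsBlockAntidiag

variable {A : WithLp 2 (E × F) →ₗ.[𝕜] WithLp 2 (E × F)} {T : E →ₗ.[𝕜] F} {S : F →ₗ.[𝕜] E}

theorem mem_domain_iff (hA : A.IsBlockAntidiag T S) {z : WithLp 2 (E × F)} :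
    z ∈ A.domain ↔ z.ofLp.1 ∈ T.domain ∧ z.ofLp.2 ∈ S.domain := by
  rw [hA.domain_eq]
  exact Submodule.mem_prod

theorem ofLp_apply (hA : A.IsBlockAntidiag T S) (p : A.domain) :
    (A p).ofLp = (S ⟨_, (hA.mem_domain_iff.1 p.2).2⟩, T ⟨_, (hA.mem_domain_iff.1 p.2).1⟩) :=
  hA.apply_eq p _ _ rfl

theorem ofLp_apply_mk (hA : A.IsBlockAntidiag T S) (x : T.domain) (y : S.domain)
    (h : WithLp.toLp 2 ((x : E), (y : F)) ∈ A.domain) : (A ⟨_, h⟩).ofLp = (S y, T x) :=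
  hA.apply_eq _ x y rfl

theorem dense_domain (hA : A.IsBlockAntidiag T S) (hT : Dense (T.domain : Set E))
    (hS : Dense (S.domain : Set F)) : Dense (A.domain : Set (WithLp 2 (E × F))) := by
  have : (A.domain : Set (WithLp 2 (E × F))) =
      WithLp.ofLp ⁻¹' ((T.domain : Set E) ×ˢ (S.domain : Set F)) := by
    ext z
    exact hA.mem_domain_iff
  rw [this]
  exact (hT.prod hS).preimage (WithLp.prodContinuousLinearEquiv 2 𝕜 E F).toHomeomorph.isOpenMap

theorem mem_graph_iff (hA : A.IsBlockAntidiag T S) {z w : WithLp 2 (E × F)} :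
    (z, w) ∈ A.graph ↔ (z.ofLp.2, w.ofLp.1) ∈ S.graph ∧ (z.ofLp.1, w.ofLp.2) ∈ T.graph := by
  constructor
  · intro h
    obtain ⟨p, rfl, rfl⟩ := (LinearPMap.mem_graph_iff _).1 h
    rw [hA.ofLp_apply]
    exact ⟨S.mem_graph ⟨_, _⟩, T.mem_graph ⟨_, _⟩⟩
  · rintro ⟨hS, hT⟩
    have hz : z ∈ A.domain :=
      hA.mem_domain_iff.2 ⟨mem_domain_of_mem_graph hT, mem_domain_of_mem_graph hS⟩
    refine (LinearPMap.mem_graph_iff _).2 ⟨⟨z, hz⟩, rfl, WithLp.ofLp_injective 2 ?_⟩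
    rw [hA.ofLp_apply]
    exact Prod.ext (S.mem_graph_snd_inj (S.mem_graph _) hS rfl)
      (T.mem_graph_snd_inj (T.mem_graph _) hT rfl)

variable [CompleteSpace E] [CompleteSpace F]

theorem mem_graph_adjoint_iff (hA : A.IsBlockAntidiag T S) (hT : Dense (T.domain : Set E))
    (hS : Dense (S.domain : Set F)) {z w : WithLp 2 (E × F)} :
    (z, w) ∈ A†.graph ↔ (z.ofLp.2, w.ofLp.1) ∈ T†.graph ∧ (z.ofLp.1, w.ofLp.2) ∈ S†.graph := by
  rw [LinearPMap.mem_graph_adjoint_iff (hA.dense_domain hT hS),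
    LinearPMap.mem_graph_adjoint_iff hT, LinearPMap.mem_graph_adjoint_iff hS]
  constructor
  · intro h
    refine ⟨fun x => ?_, fun y => ?_⟩
    · have hx : WithLp.toLp 2 ((x : E), ((0 : S.domain) : F)) ∈ A.domain :=
        hA.mem_domain_iff.2 ⟨x.2, (0 : S.domain).2⟩
      have := h ⟨_, hx⟩
      rw [WithLp.prod_inner_apply, WithLp.prod_inner_apply, hA.ofLp_apply_mk x 0] at this
      simpa using this
    · have hy : WithLp.toLp 2 (((0 : T.domain) : E), (y : F)) ∈ A.domain :=
        hA.mem_domain_iff.2 ⟨(0 : T.domain).2, y.2⟩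
      have := h ⟨_, hy⟩
      rw [WithLp.prod_inner_apply, WithLp.prod_inner_apply, hA.ofLp_apply_mk 0 y] at this
      simpa using this
  · rintro ⟨hT', hS'⟩ p
    rw [WithLp.prod_inner_apply, WithLp.prod_inner_apply, hA.ofLp_apply, hT' ⟨_, _⟩, hS' ⟨_, _⟩,
      add_comm]

theorem adjoint_eq_self (hA : A.IsBlockAntidiag T T†) (hT : Dense (T.domain : Set E))
    (hc : T.IsClosed) : A† = A := by
  refine eq_of_eq_graph (Submodule.ext fun ⟨z, w⟩ => ?_)
  rw [hA.mem_graph_adjoint_iff hT (dense_adjoint_domain hT hc), hA.mem_graph_iff,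
    adjoint_adjoint hT hc]

end IsBlockAntidiag

end LinearPMap

end

/-- Let `H` be a complex Hilbert space and `t` a densely defined closed operator on `H`.
Then its adjoint `t*` is densely defined, and the operator `t̂` on the Hilbert space
`H ⊕ H` (modelled as `WithLp 2 (H × H)`) with domain `Dom(t) × Dom(t*)` given by
`t̂(x, y) = (t*y, tx)` is selfadjoint, i.e. `t̂` coincides with its adjoint. -/
theorem stmt_13 {H : Type*} [NormedAddCommGroup H] [InnerProductSpace ℂ H] [CompleteSpace H]
    (t : H →ₗ.[ℂ] H) (hdense : Dense (t.domain : Set H))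
    (hclosed : IsClosed (t.graph : Set (H × H))) :
    Dense (t.adjoint.domain : Set H) ∧
    ∀ that : WithLp 2 (H × H) →ₗ.[ℂ] WithLp 2 (H × H),
      that.domain =
        (t.domain.prod t.adjoint.domain).comap (WithLp.linearEquiv 2 ℂ (H × H)).toLinearMap →
      (∀ (p : that.domain) (x : t.domain) (y : t.adjoint.domain),
        WithLp.linearEquiv 2 ℂ (H × H) (↑p : WithLp 2 (H × H)) = ((x : H), (y : H)) →
        WithLp.linearEquiv 2 ℂ (H × H) (that p) = ((t.adjoint y : H), (t x : H))) →
      that.adjoint = that :=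
  ⟨LinearPMap.dense_adjoint_domain hdense hclosed, fun _ hdom happ =>
    LinearPMap.IsBlockAntidiag.adjoint_eq_self ⟨hdom, happ⟩ hdense hclosed⟩
end

section
/- Let H be an infinite-dimensional complex Hilbert space. Then the gap metric on the bounded linear operators on H is not complete: there exists a sequence (Tₙ) of bounded operators on H such that the sequence of graph projections (P_{G(Tₙ)}) is Cauchy in operator norm, but there is no bounded operator T on H with ‖P_{G(Tₙ)} − P_{G(T)}‖ → 0. -/
open ContinuousLinearMap Filter Topology
open scoped InnerProduct

section RangeProjection

variable {E F : Type*} [NormedAddCommGroup E] [InnerProductSpace ℂ E] [CompleteSpace E]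
  [NormedAddCommGroup F] [InnerProductSpace ℂ F] [CompleteSpace F]

theorem isOrthogonalProjectionOnto_smul_comp_adjoint (A : F →L[ℂ] E) {s : ℝ} (hs : s ≠ 0)
    (hA : A† ∘L A = (s : ℂ) • 1) :
    IsOrthogonalProjectionOnto ((s⁻¹ : ℂ) • (A ∘L A†)) (LinearMap.range (A : F →ₗ[ℂ] E)) := by
  have hs' : (s : ℂ) ≠ 0 := Complex.ofReal_ne_zero.2 hs
  have hAA (y : F) : A ((A†) (A y)) = (s : ℂ) • A y := by
    rw [← comp_apply (A†), hA, smul_apply, one_apply_eq_self, map_smul]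
  refine ⟨?_, ?_, ?_⟩
  · refine IsSelfAdjoint.smul (by simp [IsSelfAdjoint, ← Complex.ofReal_inv]) ?_
    rw [isSelfAdjoint_iff', adjoint_comp, adjoint_adjoint]
  · ext x
    simp only [mul_apply_eq_comp, smul_apply, comp_apply, map_smul, hAA, smul_smul]
    rw [inv_mul_cancel₀ hs', mul_one]
  · refine le_antisymm ?_ fun _ ⟨y, hy⟩ => ⟨A y, ?_⟩
    · rintro _ ⟨x, rfl⟩
      exact ⟨(s⁻¹ : ℂ) • (A†) x, by simp⟩
    · simp only [← hy, coe_coe, smul_apply, comp_apply, hAA, smul_smul, inv_mul_cancel₀ hs',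
        one_smul]

end RangeProjection

section LineProjection

variable {H : Type*} [NormedAddCommGroup H] [InnerProductSpace ℂ H]

theorem mem_boundedGraph_iff (T : H →L[ℂ] H) (p : WithLp 2 (H × H)) :
    p ∈ boundedGraph T ↔ T p.fst = p.snd := by
  rw [boundedGraph, Submodule.mem_comap, LinearMap.mem_graph_iff]
  exact eq_comm

noncomputable def lineEmbedding (t : ℂ) : H →L[ℂ] WithLp 2 (H × H) :=
  (WithLp.prodContinuousLinearEquiv 2 ℂ H H).symm.toContinuousLinearMap ∘L
    (t • inl ℂ H H + inr ℂ H H)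

@[simp]
theorem lineEmbedding_apply (t : ℂ) (y : H) : lineEmbedding t y = WithLp.toLp 2 (t • y, y) := by
  simp [lineEmbedding, ← WithLp.toLp_smul, ← WithLp.toLp_add]

theorem continuous_lineEmbedding : Continuous (lineEmbedding (H := H)) := by
  unfold lineEmbedding
  fun_prop

theorem mem_range_lineEmbedding (t : ℂ) (p : WithLp 2 (H × H)) :
    p ∈ LinearMap.range (lineEmbedding (H := H) t : H →ₗ[ℂ] WithLp 2 (H × H)) ↔
      p.fst = t • p.snd := by
  constructor
  · rintro ⟨y, rfl⟩
    simp
  · intro h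
    exact ⟨p.snd, by rw [coe_coe, lineEmbedding_apply, ← h]; rfl⟩

theorem range_lineEmbedding_inv {c : ℂ} (hc : c ≠ 0) :
    LinearMap.range (lineEmbedding (H := H) c⁻¹ : H →ₗ[ℂ] WithLp 2 (H × H)) =
      boundedGraph (c • 1) := by
  ext p
  rw [mem_range_lineEmbedding, mem_boundedGraph_iff, smul_apply, one_apply_eq_self,
    eq_inv_smul_iff₀ hc]

variable [CompleteSpace H]

theorem adjoint_comp_lineEmbedding (t : ℂ) :
    (lineEmbedding t)† ∘L lineEmbedding (H := H) t = ((1 + ‖t‖ ^ 2 : ℝ) : ℂ) • 1 := by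
  ext y
  refine ext_inner_right ℂ fun z => ?_
  simp only [comp_apply, adjoint_inner_left, lineEmbedding_apply, WithLp.prod_inner_apply,
    smul_apply, one_apply_eq_self, inner_smul_left, inner_smul_right, Complex.conj_ofReal]
  push_cast
  linear_combination inner ℂ y z * Complex.conj_mul' t

noncomputable def lineProj (t : ℂ) : WithLp 2 (H × H) →L[ℂ] WithLp 2 (H × H) :=
  ((1 + ‖t‖ ^ 2 : ℝ) : ℂ)⁻¹ • (lineEmbedding t ∘L (lineEmbedding t)†)

theorem isOrthogonalProjectionOnto_lineProj (t : ℂ) :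
    IsOrthogonalProjectionOnto (lineProj t)
      (LinearMap.range (lineEmbedding (H := H) t : H →ₗ[ℂ] WithLp 2 (H × H))) :=
  isOrthogonalProjectionOnto_smul_comp_adjoint _ (by positivity) (adjoint_comp_lineEmbedding t)

theorem continuous_lineProj : Continuous (lineProj (H := H)) := by
  have := continuous_lineEmbedding (H := H)
  exact ((by fun_prop : Continuous fun t : ℂ => ((1 + ‖t‖ ^ 2 : ℝ) : ℂ)).inv₀
    fun t => Complex.ofReal_ne_zero.2 (by positivity)).smul (by fun_prop)

end LineProjection

/-- Let `H` be an infinite-dimensional complex Hilbert space. Then the gap metric on the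
bounded operators on `H` is not complete: there is a sequence `(Tₙ)` of bounded operators
whose graph projections `(P_{G(Tₙ)})` form a Cauchy sequence in operator norm, but no
bounded operator `T` satisfies `‖P_{G(Tₙ)} − P_{G(T)}‖ → 0`. -/
theorem stmt_16 {H : Type*} [NormedAddCommGroup H] [InnerProductSpace ℂ H] [CompleteSpace H]
    (hinf : ¬ FiniteDimensional ℂ H) :
    ∃ (T : ℕ → H →L[ℂ] H) (P : ℕ → (WithLp 2 (H × H) →L[ℂ] WithLp 2 (H × H))),
      (∀ n, IsOrthogonalProjectionOnto (P n) (boundedGraph (T n))) ∧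
      CauchySeq P ∧
      ∀ (S : H →L[ℂ] H) (Q : WithLp 2 (H × H) →L[ℂ] WithLp 2 (H × H)),
        IsOrthogonalProjectionOnto Q (boundedGraph S) →
        ¬ Filter.Tendsto (fun n => ‖P n - Q‖) Filter.atTop (nhds 0) := by
  have : Nontrivial H := not_subsingleton_iff_nontrivial.1 fun _ => hinf Module.Finite.of_finite
  obtain ⟨x, hx⟩ := exists_ne (0 : H)
  have hlim : Tendsto (fun n : ℕ => lineProj (H := H) ((n : ℂ) + 1)⁻¹) atTop (𝓝 (lineProj 0)) :=
    continuous_lineProj.continuousAt.tendsto.comp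
      (by simpa using tendsto_one_div_add_atTop_nhds_zero_nat (𝕜 := ℂ))
  refine ⟨fun n => ((n : ℂ) + 1) • 1, fun n => lineProj ((n : ℂ) + 1)⁻¹, fun n => ?_,
    hlim.cauchySeq, ?_⟩
  · rw [← range_lineEmbedding_inv (Nat.cast_add_one_ne_zero n)]
    exact isOrthogonalProjectionOnto_lineProj _
  rintro S Q ⟨-, -, hQ⟩ hQlim
  have hQ0 : Q = lineProj 0 :=
    tendsto_nhds_unique (tendsto_iff_norm_sub_tendsto_zero.2 hQlim) hlim
  have hxS : WithLp.toLp 2 (x, S x) ∈ LinearMap.range (lineEmbedding (H := H) 0 : H →ₗ[ℂ] _) := by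
    rw [← (isOrthogonalProjectionOnto_lineProj 0).2.2, ← hQ0, hQ, mem_boundedGraph_iff]
    rfl
  exact hx (((mem_range_lineEmbedding 0 _).1 hxS).trans (zero_smul ℂ _))
end
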